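/- arXiv:1506.01686 — 6 statements merged into one kernel-verified Lean document; each statement's English description precedes it below -/
import Mathlib

section
/- Let G_m, H_m : [0,1) → ℝ be positive functions such that (i) G_m/H_m converges uniformly as m→∞ to a function f with lim_{R→1} f(R) = 1, (ii) for each m, lim_{R→1} H_m(R) = lim_{R→1} G_m(R) = 0, and (iii) lim_{R→1} Σ_{m=0}^∞ H_m(R) = D < ∞. Then lim_{R→1} Σ_{m=0}^∞ G_m(R) = D. -/
open Filter

/-- Comparison lemma: if positive functions `G_m, H_m` on `[0,1)` satisfy
(i) `G_m/H_m → f` uniformly on `[0,1)` with `lim_{R→1⁻} f(R) = 1`,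
(ii) for each `m`, `H_m(R) → 0` and `G_m(R) → 0` as `R → 1⁻`,
(iii) `∑_m H_m(R) → D` as `R → 1⁻` (with the sums `∑_m H_m(R)`, `∑_m G_m(R)`
convergent for each `R ∈ [0,1)`), then `∑_m G_m(R) → D` as `R → 1⁻`. -/
theorem stmt_5 (G H : ℕ → ℝ → ℝ) (f : ℝ → ℝ) (D : ℝ)
    (hpos : ∀ m, ∀ R ∈ Set.Ico (0:ℝ) 1, 0 < G m R ∧ 0 < H m R)
    (hunif : TendstoUniformlyOn (fun m R => G m R / H m R) f atTop (Set.Ico (0:ℝ) 1))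
    (hf : Tendsto f (nhdsWithin 1 (Set.Iio 1)) (nhds 1))
    (hH0 : ∀ m, Tendsto (H m) (nhdsWithin 1 (Set.Iio 1)) (nhds 0))
    (hG0 : ∀ m, Tendsto (G m) (nhdsWithin 1 (Set.Iio 1)) (nhds 0))
    (hHsum : ∀ R ∈ Set.Ico (0:ℝ) 1, Summable (fun m => H m R))
    (hGsum : ∀ R ∈ Set.Ico (0:ℝ) 1, Summable (fun m => G m R))
    (hHlim : Tendsto (fun R => ∑' m, H m R) (nhdsWithin 1 (Set.Iio 1)) (nhds D)) :
    Tendsto (fun R => ∑' m, G m R) (nhdsWithin 1 (Set.Iio 1)) (nhds D) := by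
  have hsub : Tendsto (fun R => ∑' m, G m R - ∑' m, H m R)
      (nhdsWithin 1 (Set.Iio 1)) (nhds 0) := by
    rw [NormedAddCommGroup.tendsto_nhds_zero]
    intro ε hε
    set C : ℝ := |D| + 1 with hCdef
    have hCpos : 0 < C := by positivity
    set δ : ℝ := ε / (8 * C) with hδdef
    have hδpos : 0 < δ := by positivity
    have hδC : δ * C = ε / 8 := by rw [hδdef]; field_simp
    clear_value C δ
    -- uniform convergence: pick M
    have h1 := (Metric.tendstoUniformlyOn_iff.mp hunif) (δ / 2) (by positivity)
    obtain ⟨M, hM⟩ := eventually_atTop.mp h1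
    -- eventual bounds in R
    have eC : ∀ᶠ R in nhdsWithin 1 (Set.Iio 1), ∑' m, H m R ≤ C := by
      have hDC : D < C := by
        have := le_abs_self D
        simp only [hCdef]; linarith
      filter_upwards [hHlim.eventually (gt_mem_nhds hDC)] with R hR using hR.le
    have ef : ∀ᶠ R in nhdsWithin 1 (Set.Iio 1), |f R - 1| < δ / 2 := by
      have := Metric.tendsto_nhds.mp hf (δ / 2) (by positivity)
      filter_upwards [this] with R hR
      rw [Real.dist_eq] at hR; exact hR
    have eFin : ∀ᶠ R in nhdsWithin 1 (Set.Iio 1),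
        |∑ m ∈ Finset.range M, (G m R - H m R)| < ε / 2 := by
      have htend : Tendsto (fun R => ∑ m ∈ Finset.range M, (G m R - H m R))
          (nhdsWithin 1 (Set.Iio 1)) (nhds 0) := by
        have := tendsto_finset_sum (Finset.range M)
          (fun m _ => (hG0 m).sub (hH0 m))
        simpa using this
      have := Metric.tendsto_nhds.mp htend (ε / 2) (by positivity)
      filter_upwards [this] with R hR
      rw [Real.dist_eq, sub_zero] at hR; exact hR
    have e0 : ∀ᶠ R in nhdsWithin 1 (Set.Iio 1), R ∈ Set.Ico (0:ℝ) 1 := by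
      have h1' : ∀ᶠ R in nhdsWithin (1:ℝ) (Set.Iio 1), R < 1 := by
        filter_upwards [self_mem_nhdsWithin] with x hx; exact hx
      have h2' : ∀ᶠ R in nhdsWithin 1 (Set.Iio 1), (0:ℝ) < R :=
        eventually_nhdsWithin_of_eventually_nhds (eventually_gt_nhds one_pos)
      filter_upwards [h1', h2'] with R hR1 hR2
      exact ⟨hR2.le, hR1⟩
    filter_upwards [eC, ef, eFin, e0] with R hCR hfR hFinR hR
    have hHs := hHsum R hR
    have hGs := hGsum R hR
    have hHt : Summable (fun m => H (m + M) R) := (summable_nat_add_iff M).2 hHs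
    have hGt : Summable (fun m => G (m + M) R) := (summable_nat_add_iff M).2 hGs
    have key : ∀ m : ℕ, |G (m + M) R - H (m + M) R| ≤ δ * H (m + M) R := by
      intro m
      have hHp := (hpos (m + M) R hR).2
      have hq : |G (m + M) R / H (m + M) R - 1| ≤ δ := by
        have h1' := hM (m + M) (Nat.le_add_left M m) R hR
        rw [Real.dist_eq] at h1'
        have habs : |G (m + M) R / H (m + M) R - 1| ≤
            |G (m + M) R / H (m + M) R - f R| + |f R - 1| := by
          have := abs_sub_le (G (m + M) R / H (m + M) R) (f R) 1
          exact this
        have h2' : |G (m + M) R / H (m + M) R - f R| < δ / 2 := by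
          rw [abs_sub_comm]; exact h1'
        linarith
      have heq : G (m + M) R - H (m + M) R =
          (G (m + M) R / H (m + M) R - 1) * H (m + M) R := by
        field_simp
      rw [heq, abs_mul, abs_of_pos hHp]
      exact mul_le_mul_of_nonneg_right hq hHp.le
    have hdiff : Summable (fun m => G (m + M) R - H (m + M) R) := hGt.sub hHt
    have htailH_le : ∑' m, H (m + M) R ≤ ∑' m, H m R := by
      have hsplit := Summable.sum_add_tsum_nat_add M hHs
      have hfin : (0:ℝ) ≤ ∑ i ∈ Finset.range M, H i R :=
        Finset.sum_nonneg fun i _ => (hpos i R hR).2.le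
      linarith
    have tailbound : |∑' m, (G (m + M) R - H (m + M) R)| ≤ δ * C := by
      have h1' : |∑' m, (G (m + M) R - H (m + M) R)| ≤
          ∑' m, |G (m + M) R - H (m + M) R| := by
        have := norm_tsum_le_tsum_norm (f := fun m => G (m + M) R - H (m + M) R)
          (by simpa [Real.norm_eq_abs] using hdiff.abs)
        simpa [Real.norm_eq_abs] using this
      have h2' : ∑' m, |G (m + M) R - H (m + M) R| ≤ ∑' m, δ * H (m + M) R :=
        Summable.tsum_le_tsum key hdiff.abs (hHt.mul_left δ)
      have h3' : ∑' m, δ * H (m + M) R = δ * ∑' m, H (m + M) R := tsum_mul_left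
      have h4' : δ * ∑' m, H (m + M) R ≤ δ * C :=
        mul_le_mul_of_nonneg_left (le_trans htailH_le hCR) hδpos.le
      linarith
    have hGsplit := Summable.sum_add_tsum_nat_add M hGs
    have hHsplit := Summable.sum_add_tsum_nat_add M hHs
    have hdiffsplit : ∑' m, G m R - ∑' m, H m R =
        (∑ m ∈ Finset.range M, (G m R - H m R)) +
          ∑' m, (G (m + M) R - H (m + M) R) := by
      rw [Summable.tsum_sub hGt hHt, Finset.sum_sub_distrib]
      linarith
    rw [Real.norm_eq_abs, hdiffsplit]
    calc |(∑ m ∈ Finset.range M, (G m R - H m R)) +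
          ∑' m, (G (m + M) R - H (m + M) R)|
        ≤ |∑ m ∈ Finset.range M, (G m R - H m R)| +
          |∑' m, (G (m + M) R - H (m + M) R)| := abs_add_le _ _
      _ < ε / 2 + δ * C := add_lt_add_of_lt_of_le hFinR tailbound
      _ ≤ ε := by rw [hδC]; linarith
  have heq : (fun R => ∑' m, G m R) =
      fun R => (∑' m, G m R - ∑' m, H m R) + ∑' m, H m R := by
    funext R; ring
  rw [heq]
  simpa using hsub.add hHlim
end

section
/- Let {f_i}_{i∈ℕ} be nonzero holomorphic functions on the unit disk 𝔻 such that the functions |f_i|² are pairwise distinct as functions on 𝔻, and Σ_i f_i(z) converges absolutely for every z ∈ 𝔻. Let {α_i} be a bounded sequence of complex numbers. If there is a sequence of integers N_m → ∞ with Σ_{i=1}^∞ α_i·f_i^{N_m}(z) = 0 for all m and all z ∈ 𝔻, then α_i = 0 for every i. -/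
/-!
Baire category gives a point `z` of the disk with `f i z ≠ 0` at which the moduli `‖f j z‖` are
pairwise distinct: each `‖f j‖² - ‖f k‖²` is real analytic and not identically zero, so its zero
set is nowhere dense. Since `‖f j z‖ → 0`, among the indices with `α j ≠ 0` one, `j`, has strictly
largest modulus. Dividing the vanishing sums by `f j z ^ N m` and letting `m → ∞` (dominated
convergence) leaves `α j = 0`, a contradiction.
-/

open Filter Topology Set

theorem AnalyticAt.norm_sq {E F : Type*} [NormedAddCommGroup E] [NormedSpace ℝ E]
    [NormedAddCommGroup F] [InnerProductSpace ℝ F] {f : E → F} {x : E}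
    (hf : AnalyticAt ℝ f x) : AnalyticAt ℝ (fun y => ‖f y‖ ^ 2) x := by
  have := AnalyticAt.comp (g := fun p : F × F => innerSL ℝ p.1 p.2)
    (f := fun y => (f y, f y)) ((innerSL ℝ).analyticAt_bilinear (f x, f x)) (hf.prod hf)
  simpa [Function.comp_def, real_inner_self_eq_norm_sq] using this

theorem AnalyticOnNhd.norm_sq {E F : Type*} [NormedAddCommGroup E] [NormedSpace ℝ E]
    [NormedAddCommGroup F] [InnerProductSpace ℝ F] {f : E → F} {s : Set E}
    (hf : AnalyticOnNhd ℝ f s) : AnalyticOnNhd ℝ (fun y => ‖f y‖ ^ 2) s :=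
  fun x hx => (hf x hx).norm_sq

theorem AnalyticOnNhd.subset_closure_setOf_ne_zero {𝕜 E F : Type*} [NontriviallyNormedField 𝕜]
    [NormedAddCommGroup E] [NormedSpace 𝕜 E] [NormedAddCommGroup F] [NormedSpace 𝕜 F]
    {g : E → F} {U : Set E} (hg : AnalyticOnNhd 𝕜 g U) (hUo : IsOpen U)
    (hUc : IsPreconnected U) (hne : ∃ w ∈ U, g w ≠ 0) :
    U ⊆ closure {z ∈ U | g z ≠ 0} := by
  intro z hz
  by_contra hcl
  have hzero : g =ᶠ[𝓝 z] 0 := by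
    filter_upwards [hUo.mem_nhds hz, (isOpen_compl_iff.2 isClosed_closure).mem_nhds hcl]
      with w hwU hw
    by_contra hgw
    exact hw (subset_closure ⟨hwU, hgw⟩)
  obtain ⟨w, hwU, hgw⟩ := hne
  exact hgw (hg.eqOn_zero_of_preconnected_of_eventuallyEq_zero hUc hz hzero hwU)

theorem IsOpen.subset_closure_inter_iInter {X ι : Type*} [TopologicalSpace X] [BaireSpace X]
    [Countable ι] {U : Set X} (hU : IsOpen U) {s : ι → Set X} (hs : ∀ n, IsOpen (s n))
    (hd : ∀ n, U ⊆ closure (s n)) : U ⊆ closure (U ∩ ⋂ n, s n) := by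
  -- adding `(closure U)ᶜ` makes each `s n` dense in all of `X`
  have hdense : Dense (⋂ n, (s n ∪ (closure U)ᶜ)) := by
    refine dense_iInter_of_isOpen (fun n => (hs n).union isClosed_closure.isOpen_compl) fun n => ?_
    refine dense_iff_closure_eq.2 (eq_univ_of_forall fun x => ?_)
    by_cases hx : x ∈ closure U
    · exact closure_mono subset_union_left (closure_minimal (hd n) isClosed_closure hx)
    · exact subset_closure (Or.inr hx)
  refine (hdense.open_subset_closure_inter hU).trans (closure_mono ?_)
  rintro x ⟨hxU, hx⟩
  refine ⟨hxU, mem_iInter.2 fun n => ?_⟩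
  exact (mem_iInter.1 hx n).resolve_right (not_not.2 (subset_closure hxU))

theorem AnalyticOnNhd.exists_mem_forall_ne_zero {E ι : Type*} [NormedAddCommGroup E]
    [NormedSpace ℝ E] [CompleteSpace E] [Countable ι] {g : ι → E → ℝ} {U W : Set E}
    (hg : ∀ n, AnalyticOnNhd ℝ (g n) U) (hUo : IsOpen U) (hUc : IsPreconnected U)
    (hne : ∀ n, ∃ w ∈ U, g n w ≠ 0) (hW : IsOpen W) (hWU : W ⊆ U) (hWne : W.Nonempty) :
    ∃ z ∈ W, ∀ n, g n z ≠ 0 := by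
  have hsub := hUo.subset_closure_inter_iInter
    (fun n => (hg n).continuousOn.isOpen_inter_preimage hUo isOpen_compl_singleton)
    fun n => (hg n).subset_closure_setOf_ne_zero hUo hUc (hne n)
  obtain ⟨w, hwW⟩ := hWne
  obtain ⟨z, hzW, -, hz⟩ := mem_closure_iff.1 (hsub (hWU hwW)) W hW hwW
  exact ⟨z, hzW, fun n => (mem_iInter.1 hz n).2⟩

theorem Filter.Tendsto.exists_mem_forall_lt {α : Type*} {c : α → ℝ}
    (hc : Tendsto c cofinite (𝓝 0)) {S : Set α} (hcS : S.InjOn c) {i : α} (hiS : i ∈ S)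
    (hci : 0 < c i) : ∃ j ∈ S, ∀ k ∈ S, k ≠ j → c k < c j := by
  have hfin : {k | c i ≤ c k}.Finite := by
    simpa using eventually_cofinite.1 (hc.eventually (gt_mem_nhds hci))
  obtain ⟨j, ⟨hjS, hij⟩, hjmax⟩ :=
    (S ∩ {k | c i ≤ c k}).exists_max_image c (hfin.inter_of_right S) ⟨i, hiS, le_refl (c i)⟩
  refine ⟨j, hjS, fun k hkS hkj => ?_⟩
  rcases le_or_gt (c i) (c k) with hik | hki
  · exact (hjmax k ⟨hkS, hik⟩).lt_of_ne fun h => hkj (hcS hkS hjS h)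
  · exact hki.trans_le hij

theorem eq_zero_of_hasSum_mul_pow_eq_zero_of_norm_lt_one {a r : ℕ → ℂ} {N : ℕ → ℕ} {C : ℝ}
    {j : ℕ} (ha : ∀ k, ‖a k‖ ≤ C) (hr : Summable (‖r ·‖)) (hrj : r j = 1)
    (hlt : ∀ k ≠ j, a k ≠ 0 → ‖r k‖ < 1) (hN : Tendsto N atTop atTop)
    (hsum : ∀ m, HasSum (fun k => a k * r k ^ N m) 0) : a j = 0 := by
  have hC : 0 ≤ C := (norm_nonneg _).trans (ha 0)
  have hle : ∀ k, a k ≠ 0 → ‖r k‖ ≤ 1 := fun k hk => by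
    rcases eq_or_ne k j with rfl | hkj
    · simp [hrj]
    · exact (hlt k hkj hk).le
  have hlim : Tendsto (fun m => ∑' k, a k * r k ^ N m) atTop
      (𝓝 (∑' k, (Pi.single j (a j) : ℕ → ℂ) k)) := by
    refine tendsto_tsum_of_dominated_convergence (hr.mul_left C) (fun k => ?_) ?_
    · rcases eq_or_ne k j with rfl | hkj
      · simp [hrj]
      rcases eq_or_ne (a k) 0 with hk | hk
      · simp [hk, hkj]
      simpa [hkj] using
        ((tendsto_pow_atTop_nhds_zero_of_norm_lt_one (hlt k hkj hk)).comp hN).const_mul (a k)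
    · filter_upwards [hN.eventually_ge_atTop 1] with m hm k
      rcases eq_or_ne (a k) 0 with hk | hk
      · simpa [hk] using mul_nonneg hC (norm_nonneg (r k))
      rw [norm_mul, norm_pow]
      exact mul_le_mul (ha k) (pow_le_of_le_one (norm_nonneg _) (hle k hk) (by omega))
        (by positivity) hC
  simp only [(hsum _).tsum_eq, tsum_pi_single] at hlim
  exact (tendsto_nhds_unique tendsto_const_nhds hlim).symm

theorem eq_zero_of_hasSum_mul_pow_eq_zero {a w : ℕ → ℂ} {N : ℕ → ℕ} {C : ℝ}
    (ha : ∀ k, ‖a k‖ ≤ C) (hw : Summable (‖w ·‖)) (hinj : {k | a k ≠ 0}.InjOn (‖w ·‖))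
    (hN : Tendsto N atTop atTop) (hsum : ∀ m, HasSum (fun k => a k * w k ^ N m) 0)
    {i : ℕ} (hi : w i ≠ 0) : a i = 0 := by
  by_contra hai
  obtain ⟨j, hj, hdom⟩ := (Nat.cofinite_eq_atTop ▸ hw.tendsto_atTop_zero).exists_mem_forall_lt
    hinj hai (norm_pos_iff.2 hi)
  have hwj : w j ≠ 0 := by
    rcases eq_or_ne i j with rfl | hij
    · exact hi
    · exact norm_pos_iff.1 ((norm_nonneg _).trans_lt (hdom i hai hij))
  refine hj (eq_zero_of_hasSum_mul_pow_eq_zero_of_norm_lt_one ha (r := fun k => w k / w j)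
    (by simpa [norm_div] using hw.div_const ‖w j‖) (div_self hwj) (fun k hkj hk => ?_) hN
    fun m => ?_)
  · rw [norm_div, div_lt_one (norm_pos_iff.2 hwj)]
    exact hdom k hk hkj
  · simpa [div_pow, mul_div_assoc] using (hsum m).div_const (w j ^ N m)

/-- Let `{f_i}` be nonzero holomorphic functions on the unit disk whose squared moduli
`|f_i|²` are pairwise distinct functions, with `∑_i f_i(z)` absolutely convergent at each
point of the disk, and let `{α_i}` be a bounded sequence of complex numbers. If for a
sequence of integers `N_m → ∞` one has `∑_i α_i f_i(z)^{N_m} = 0` for all `m` and all `z`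
in the disk, then every `α_i = 0`. -/
theorem stmt_6 (f : ℕ → ℂ → ℂ) (α : ℕ → ℂ) (N : ℕ → ℕ)
    (hol : ∀ i, DifferentiableOn ℂ (f i) (Metric.ball (0:ℂ) 1))
    (hnz : ∀ i, ∃ z ∈ Metric.ball (0:ℂ) 1, f i z ≠ 0)
    (hdist : ∀ i j, i ≠ j →
      ∃ z ∈ Metric.ball (0:ℂ) 1, ‖f i z‖ ^ 2 ≠ ‖f j z‖ ^ 2)
    (habs : ∀ z ∈ Metric.ball (0:ℂ) 1, Summable (fun i => ‖f i z‖))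
    (hbdd : ∃ C : ℝ, ∀ i, ‖α i‖ ≤ C)
    (hN : Tendsto N atTop atTop)
    (hzero : ∀ m, ∀ z ∈ Metric.ball (0:ℂ) 1, HasSum (fun i => α i * (f i z) ^ (N m)) 0) :
    ∀ i, α i = 0 := by
  intro i
  obtain ⟨C, hC⟩ := hbdd
  have hnormSq : ∀ j, AnalyticOnNhd ℝ (fun z => ‖f j z‖ ^ 2) (Metric.ball 0 1) := fun j =>
    ((hol j).analyticOnNhd Metric.isOpen_ball).restrictScalars.norm_sq
  obtain ⟨z₀, hz₀, hfz₀⟩ := hnz i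
  obtain ⟨z, ⟨hzB, hfz⟩, hz⟩ := AnalyticOnNhd.exists_mem_forall_ne_zero
    (g := fun p : {p : ℕ × ℕ // p.1 ≠ p.2} => fun z => ‖f p.1.1 z‖ ^ 2 - ‖f p.1.2 z‖ ^ 2)
    (fun p => (hnormSq _).sub (hnormSq _)) Metric.isOpen_ball
    (convex_ball (0:ℂ) 1).isPreconnected
    (fun p => (hdist _ _ p.2).imp fun w hw => ⟨hw.1, sub_ne_zero.2 hw.2⟩)
    ((hol i).continuousOn.isOpen_inter_preimage Metric.isOpen_ball isOpen_compl_singleton)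
    inter_subset_left ⟨z₀, hz₀, hfz₀⟩
  refine eq_zero_of_hasSum_mul_pow_eq_zero hC (habs z hzB) (fun j _ k _ hjk => ?_) hN
    (fun m => hzero m z hzB) hfz
  by_contra hne
  exact hz ⟨(j, k), hne⟩ (sub_eq_zero.2 (congrArg (· ^ 2) hjk))
end

section
/- Let X, Y ∈ sl(n,ℂ) be the images of the standard nilpotent generators under the principal embedding, acting on homogeneous polynomials of degree n-1 in z, z̄ via -√2·X = z·∂/∂z̄ and √2·Y = z̄·∂/∂z. Set E⁰_k = (-√2 X)^k and F⁰_k = -(√2 Y)^k. Then -Tr(E⁰_k F⁰_k) = (k!)² · C(n+k, 2k+1). -/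
open Finset

/-- The matrix of `-√2·X = z ∂/∂z̄` in the basis `w_p = z^{p-1} z̄^{n-p}` (`p = 1,…,n`,
here indexed by `Fin n` with `p = i+1`): `w_p ↦ (n-p)·w_{p+1}`. -/
def Emat (n : ℕ) : Matrix (Fin n) (Fin n) ℂ :=
  fun i j => if (i : ℕ) = (j : ℕ) + 1 then ((n - 1 - (j : ℕ) : ℕ) : ℂ) else 0

/-- The matrix of `√2·Y = z̄ ∂/∂z` in the same basis: `w_p ↦ (p-1)·w_{p-1}`. -/
def Fmat (n : ℕ) : Matrix (Fin n) (Fin n) ℂ :=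
  fun i j => if (i : ℕ) + 1 = (j : ℕ) then ((j : ℕ) : ℂ) else 0

/-- `E⁰_k = (-√2 X)^k`. -/
def E0 (n k : ℕ) : Matrix (Fin n) (Fin n) ℂ := (Emat n) ^ k

/-- `F⁰_k = -(√2 Y)^k`. -/
def F0 (n k : ℕ) : Matrix (Fin n) (Fin n) ℂ := -((Fmat n) ^ k)

lemma hockey (a m : ℕ) :
    ∑ j ∈ range (m+1), (j+a).choose a = (m+a+1).choose (a+1) := by
  induction m with
  | zero => simp
  | succ m ih =>
      rw [Finset.sum_range_succ, ih]
      have e : m+1+a+1 = (m+a+1)+1 := by omega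
      have e2 : m+1+a = m+a+1 := by omega
      rw [e, e2]
      rw [Nat.add_comm]; exact (Nat.choose_succ_succ (m+a+1) a).symm

lemma tri {M : Type*} [AddCommMonoid M] (m : ℕ) (f : ℕ → ℕ → M) :
    ∑ j ∈ range (m+1), ∑ i ∈ range (m+1-j), f j i
      = ∑ s ∈ range (m+1), ∑ j ∈ range (s+1), f j (s-j) := by
  rw [Finset.sum_sigma', Finset.sum_sigma']
  refine Finset.sum_nbij' (fun x => ⟨x.1 + x.2, x.1⟩) (fun x => ⟨x.2, x.1 - x.2⟩)
    ?_ ?_ ?_ ?_ ?_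
  · rintro ⟨a, b⟩ h
    simp only [Finset.mem_sigma, Finset.mem_range] at *
    omega
  · rintro ⟨a, b⟩ h
    simp only [Finset.mem_sigma, Finset.mem_range] at *
    omega
  · rintro ⟨a, b⟩ h
    simp only [Nat.add_sub_cancel_left]
  · rintro ⟨a, b⟩ h
    simp only [Finset.mem_sigma, Finset.mem_range] at h
    have hb : b ≤ a := by omega
    simp only [Nat.add_sub_cancel' hb]
  · rintro ⟨a, b⟩ h
    simp only [Nat.add_sub_cancel_left]

lemma key (a b m : ℕ) :
    ∑ j ∈ range (m+1), (j+a).choose a * (m-j+b).choose b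
      = (m+a+b+1).choose (a+b+1) := by
  induction b generalizing m with
  | zero => simpa using hockey a m
  | succ b ih =>
      have step : ∀ j ∈ range (m+1),
          (j+a).choose a * (m-j+(b+1)).choose (b+1)
            = ∑ i ∈ range (m+1-j), (j+a).choose a * (i+b).choose b := by
        intro j hj
        rw [Finset.mem_range] at hj
        rw [← Finset.mul_sum]
        have h1 : m+1-j = (m-j)+1 := by omega
        have h2 : m-j+(b+1) = (m-j)+b+1 := by omega
        rw [h1, h2, hockey b (m-j)]
      rw [Finset.sum_congr rfl step, tri]
      have step2 : ∀ s ∈ range (m+1),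
          (∑ j ∈ range (s+1), (j+a).choose a * (s-j+b).choose b)
            = (s+(a+b+1)).choose (a+b+1) := by
        intro s _
        rw [ih s]; congr 1; omega
      rw [Finset.sum_congr rfl step2, hockey (a+b+1) m]
      congr 1 <;> omega

lemma Epow (n : ℕ) : ∀ (k : ℕ) (i j : Fin n), ((Emat n)^k) i j
    = if (i : ℕ) = (j : ℕ) + k then (((n - 1 - (j : ℕ)).descFactorial k : ℕ) : ℂ) else 0 := by
  intro k
  induction k with
  | zero =>
      intro i j
      simp [Matrix.one_apply, Fin.ext_iff]
  | succ k ih =>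
      intro i j
      rw [pow_succ, Matrix.mul_apply]
      by_cases h : (i : ℕ) = (j : ℕ) + (k + 1)
      · have hj : (j : ℕ) + 1 < n := by omega
        rw [Finset.sum_eq_single (⟨(j : ℕ) + 1, hj⟩ : Fin n)]
        · rw [if_pos h, ih]
          simp only [Emat, Fin.val_mk]
          rw [if_pos (show (i:ℕ) = (j:ℕ)+1+k by omega), if_true]
          have hm : n - 1 - (j : ℕ) = (n - 2 - (j : ℕ)) + 1 := by omega
          have hm2 : n - 1 - ((j : ℕ) + 1) = n - 2 - (j : ℕ) := by omega
          rw [hm2, hm, Nat.succ_descFactorial_succ]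
          push_cast
          ring
        · intro b _ hb
          have hb' : (b : ℕ) ≠ (j : ℕ) + 1 := by
            intro hc
            exact hb (Fin.ext (by simpa using hc))
          simp [Emat, hb']
        · intro hmem
          exact absurd (Finset.mem_univ _) hmem
      · rw [if_neg h]
        apply Finset.sum_eq_zero
        intro l _
        by_cases h1 : (l : ℕ) = (j : ℕ) + 1
        · have : (i : ℕ) ≠ (l : ℕ) + k := by omega
          rw [ih]
          simp [this]
        · simp [Emat, h1]

lemma Fpow (n : ℕ) : ∀ (k : ℕ) (i j : Fin n), ((Fmat n)^k) i j
    = if (i : ℕ) + k = (j : ℕ) then (((j : ℕ).descFactorial k : ℕ) : ℂ) else 0 := by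
  intro k
  induction k with
  | zero =>
      intro i j
      simp [Matrix.one_apply, Fin.ext_iff, eq_comm]
  | succ k ih =>
      intro i j
      rw [pow_succ, Matrix.mul_apply]
      by_cases h : (i : ℕ) + (k + 1) = (j : ℕ)
      · have hl : (i : ℕ) + k < n := by omega
        rw [Finset.sum_eq_single (⟨(i : ℕ) + k, hl⟩ : Fin n)]
        · rw [if_pos h, ih]
          simp only [Fmat, Fin.val_mk]
          rw [if_true, if_pos (show ((i:ℕ)+k)+1 = (j:ℕ) by omega)]
          have hj : (j : ℕ) = ((i : ℕ) + k) + 1 := by omega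
          rw [hj, Nat.succ_descFactorial_succ]
          push_cast
          ring
        · intro b _ hb
          have hb' : (i : ℕ) + k ≠ (b : ℕ) := by
            intro hc
            exact hb (Fin.ext (by simpa using hc.symm))
          rw [ih]
          simp [hb']
        · intro hmem
          exact absurd (Finset.mem_univ _) hmem
      · rw [if_neg h]
        apply Finset.sum_eq_zero
        intro l _
        by_cases h1 : (i : ℕ) + k = (l : ℕ)
        · have : (l : ℕ) + 1 ≠ (j : ℕ) := by omega
          simp [Fmat, this]
        · rw [ih]
          simp [h1]

/-- `-Tr(E⁰_k F⁰_k) = (k!)² C(n+k, 2k+1)` for `1 ≤ k ≤ n-1`. -/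
theorem stmt_7 (n k : ℕ) (hk1 : 1 ≤ k) (hk : k ≤ n - 1) :
    -Matrix.trace (E0 n k * F0 n k)
      = ((k.factorial : ℂ)) ^ 2 * ((n + k).choose (2 * k + 1) : ℂ) := by
  have hn : k + 1 ≤ n := by omega
  have hEF : -(E0 n k * F0 n k) = (Emat n)^k * (Fmat n)^k := by
    simp [E0, F0, Matrix.mul_neg]
  rw [← Matrix.trace_neg, hEF]
  -- diagonal entries
  have diag : ∀ i : Fin n, ((Emat n)^k * (Fmat n)^k) i i
      = if k ≤ (i : ℕ) then
          (((n - 1 - ((i : ℕ) - k)).descFactorial k * (i : ℕ).descFactorial k : ℕ) : ℂ)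
        else 0 := by
    intro i
    rw [Matrix.mul_apply]
    by_cases h : k ≤ (i : ℕ)
    · have hl : (i : ℕ) - k < n := by omega
      rw [Finset.sum_eq_single (⟨(i : ℕ) - k, hl⟩ : Fin n)]
      · rw [if_pos h, Epow, Fpow]
        simp only [Fin.val_mk]
        rw [if_pos (show (i:ℕ) = ((i:ℕ)-k)+k by omega),
          if_pos (show ((i:ℕ)-k)+k = (i:ℕ) by omega)]
        push_cast
        ring
      · intro b _ hb
        have hb' : (b : ℕ) + k ≠ (i : ℕ) := by
          intro hc
          exact hb (Fin.ext (by simp; omega))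
        rw [Fpow]
        simp [hb']
      · intro hmem
        exact absurd (Finset.mem_univ _) hmem
    · rw [if_neg h]
      apply Finset.sum_eq_zero
      intro l _
      have : (l : ℕ) + k ≠ (i : ℕ) := by omega
      rw [Fpow]
      simp [this]
  rw [Matrix.trace]
  simp only [Matrix.diag_apply]
  rw [Finset.sum_congr rfl (fun i _ => diag i),
    Fin.sum_univ_eq_sum_range (fun i : ℕ =>
      if k ≤ i then (((n - 1 - (i - k)).descFactorial k * i.descFactorial k : ℕ) : ℂ) else 0) n]
  rw [Finset.range_eq_Ico, ← Finset.sum_Ico_consecutive _ (Nat.zero_le k) (by omega : k ≤ n)]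
  rw [Finset.sum_eq_zero (fun i hi => by
    rw [Finset.mem_Ico] at hi
    rw [if_neg (by omega)]), zero_add]
  rw [Finset.sum_Ico_eq_sum_range]
  have hnk : n - k = (n - 1 - k) + 1 := by omega
  rw [hnk]
  set m := n - 1 - k with hm
  have hterm : ∀ j ∈ range (m+1),
      (if k ≤ k + j then (((n - 1 - ((k + j) - k)).descFactorial k * (k + j).descFactorial k : ℕ) : ℂ) else 0)
        = ((k.factorial * ((m - j + k).choose k) * (k.factorial * ((j + k).choose k)) : ℕ) : ℂ) := by
    intro j hj
    rw [Finset.mem_range] at hj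
    rw [if_pos (Nat.le_add_right k j)]
    have e1 : (k + j) - k = j := by omega
    have e2 : n - 1 - j = m - j + k := by omega
    have e3 : k + j = j + k := by omega
    rw [e1, e2, e3, Nat.descFactorial_eq_factorial_mul_choose, Nat.descFactorial_eq_factorial_mul_choose]
  rw [Finset.sum_congr rfl hterm, ← Nat.cast_sum]
  have hsum : ∑ j ∈ range (m+1),
      k.factorial * ((m - j + k).choose k) * (k.factorial * ((j + k).choose k))
      = k.factorial^2 * ((m + k + k + 1).choose (k + k + 1)) := by
    rw [← key k k m, Finset.mul_sum]
    apply Finset.sum_congr rfl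
    intro j _
    ring
  rw [hsum]
  have e4 : m + k + k + 1 = n + k := by omega
  have e5 : k + k + 1 = 2 * k + 1 := by omega
  rw [e4, e5]
  push_cast
  ring
end

section
/- Let u_p (p = 1,…,n) be the polynomials x^{p-1}y^{n-p} (where z = x+iy), viewed as elements of the space of homogeneous degree n-1 polynomials in z, z̄, and let π_p denote orthogonal projection onto the line spanned by u_p. With E⁰_k = (z ∂/∂z̄)^k, one has Tr(E⁰_k · π_1) = (-1)^k (n-1)! / (2^k (n-k-1)!). -/
/-- The coordinates (in the basis `w_{r+s+1} = z^{r+s} z̄^{n-1-(r+s)}`) of the real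
polynomial `u_p = x^{p-1} y^{n-p}` (with `z = x+iy`), `p = 1,…,n`, indexed by `Fin n`
with `p = (p:ℕ)+1`:
`u_p = i^{n-p}/2^{n-1} ∑_{r=0}^{p-1} ∑_{s=0}^{n-p} (-1)^s C(p-1,r) C(n-p,s) w_{r+s+1}`. -/
noncomputable def uvec (n : ℕ) (p : Fin n) : Fin n → ℂ := fun j =>
  Complex.I ^ (n - 1 - (p : ℕ)) / 2 ^ (n - 1) *
    ∑ r ∈ Finset.range ((p : ℕ) + 1), ∑ s ∈ Finset.range (n - (p : ℕ)),
      if r + s = (j : ℕ) then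
        ((-1 : ℂ)) ^ s * (((p : ℕ).choose r : ℕ) : ℂ) * (((n - 1 - (p : ℕ)).choose s : ℕ) : ℂ)
      else 0

open Finset Matrix

namespace Nat

theorem choose_mul_descFactorial_sub (m j k : ℕ) :
    m.choose j * (m - j).descFactorial k = m.descFactorial k * (m - k).choose j := by
  have h₁ := choose_mul (n := m) (k := j + k) (s := j) (le_add_right j k)
  have h₂ := choose_mul (n := m) (k := j + k) (s := k) (le_add_left k j)
  rw [Nat.add_sub_cancel_left] at h₁
  rw [Nat.add_sub_cancel, ← choose_symm_add, h₁] at h₂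
  rw [descFactorial_eq_factorial_mul_choose, descFactorial_eq_factorial_mul_choose, mul_left_comm,
    h₂, mul_assoc]

theorem sum_range_choose_mul_descFactorial (m k : ℕ) :
    ∑ j ∈ range (m + 1), m.choose j * (m - j).descFactorial k
      = m.descFactorial k * 2 ^ (m - k) := by
  simp_rw [choose_mul_descFactorial_sub, ← mul_sum, ← sum_range_choose (m - k)]
  congr 1
  refine (sum_subset (range_subset_range.mpr (by omega)) fun j hj hj' => ?_).symm
  simp only [mem_range] at hj hj'
  exact choose_eq_zero_of_lt (by omega)

theorem mul_pred_descFactorial (m k : ℕ) :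
    m * (m - 1).descFactorial k = m.descFactorial (k + 1) := by
  cases m with
  | zero => simp
  | succ m => rw [succ_descFactorial_succ, Nat.add_sub_cancel]

end Nat

theorem Matrix.eq_vecMulVec_of_mulVec_eq {K ι : Type*} [Field K] [Fintype ι] [DecidableEq ι]
    {u : ι → ι → K} (hu : LinearIndependent K u) {z : ι} {φ : ι → K}
    (hφ : ∀ q, φ ⬝ᵥ u q = if q = z then 1 else 0) {P : Matrix ι ι K}
    (hPz : P *ᵥ u z = u z) (hP : ∀ q, q ≠ z → P *ᵥ u q = 0) :
    P = vecMulVec (u z) φ := by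
  have hspan := hu.span_eq_top_of_card_eq_finrank' (Module.finrank_fintype_fun_eq_card K).symm
  refine Matrix.toLin'.injective (LinearMap.ext_on_range hspan fun q => ?_)
  rw [toLin'_apply, toLin'_apply, vecMulVec_mulVec, hφ, op_smul_eq_smul]
  split_ifs with hq
  · rw [hq, hPz, one_smul]
  · rw [hP q hq, zero_smul]

theorem sum_pow_mul_uvec (n : ℕ) (t : ℂ) (p : Fin n) :
    ∑ j : Fin n, t ^ (j : ℕ) * uvec n p j
      = Complex.I ^ (n - 1 - (p : ℕ)) / 2 ^ (n - 1) *
        ((1 + t) ^ (p : ℕ) * (1 - t) ^ (n - 1 - (p : ℕ))) := by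
  obtain ⟨q, hq⟩ : ∃ q, n - 1 - (p : ℕ) = q := ⟨_, rfl⟩
  have hq' : n - (p : ℕ) = q + 1 := by omega
  have collapse : ∀ r s, r ∈ range ((p : ℕ) + 1) → s ∈ range (q + 1) →
      ∀ c : ℂ, ∑ j : Fin n, t ^ (j : ℕ) * (if r + s = (j : ℕ) then c else 0) = t ^ (r + s) * c := by
    intro r s hr hs c
    rw [Fin.sum_univ_eq_sum_range (fun j => t ^ j * if r + s = j then c else 0)]
    simp only [mul_ite, mul_zero]
    rw [sum_ite_eq, if_pos]
    simp only [mem_range] at hr hs ⊢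
    omega
  simp only [uvec, hq, hq', mul_left_comm (t ^ _), ← mul_sum]
  congr 1
  simp_rw [mul_sum]
  rw [sum_comm, sum_congr rfl fun _ _ => sum_comm,
    sum_congr rfl fun r hr => sum_congr rfl fun s hs => collapse r s hr hs _]
  rw [add_comm 1 t, sub_eq_neg_add, add_pow, add_pow, sum_mul_sum]
  refine sum_congr rfl fun r _ => sum_congr rfl fun s _ => ?_
  rw [one_pow, one_pow, pow_add, neg_pow]
  ring

theorem linearIndependent_uvec (n : ℕ) : LinearIndependent ℂ (uvec n) := by
  rw [Fintype.linearIndependent_iff]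
  intro g hg
  let c : Fin n → ℂ := fun p => Complex.I ^ (n - 1 - (p : ℕ)) / 2 ^ (n - 1)
  have hvan : ∀ s : Fin n, ∑ p, g p * c p * ((s : ℕ) : ℂ) ^ (p : ℕ) = 0 := by
    intro s
    set x : ℂ := ((s : ℕ) : ℂ)
    have hx : x + 1 ≠ 0 := Nat.cast_add_one_ne_zero _
    set t := (x - 1) / (x + 1)
    have hpow : ∀ p : Fin n, (1 + t) ^ (p : ℕ) * (1 - t) ^ (n - 1 - (p : ℕ))
        = (2 / (x + 1)) ^ (n - 1) * x ^ (p : ℕ) := by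
      intro p
      have h1 : 1 + t = 2 / (x + 1) * x := by simp only [t]; field_simp; ring
      have h2 : 1 - t = 2 / (x + 1) := by simp only [t]; field_simp; ring
      rw [h1, h2, mul_pow, mul_right_comm, ← pow_add, Nat.add_sub_cancel' (by omega)]
    have h0 : ∑ j : Fin n, t ^ (j : ℕ) * (∑ p, g p • uvec n p) j = 0 := by
      simp only [hg, Pi.zero_apply, mul_zero, sum_const_zero]
    simp only [Finset.sum_apply, Pi.smul_apply, smul_eq_mul, mul_sum] at h0
    rw [sum_comm] at h0
    simp_rw [mul_left_comm (t ^ _) (g _), ← mul_sum, sum_pow_mul_uvec, hpow] at h0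
    have h2 : (2 / (x + 1)) ^ (n - 1) ≠ 0 := pow_ne_zero _ (div_ne_zero two_ne_zero hx)
    refine (mul_eq_zero.mp ?_).resolve_left h2
    rw [← h0, mul_sum]
    exact sum_congr rfl fun p _ => by ring
  have hgc := eq_zero_of_forall_index_sum_mul_pow_eq_zero
    (fun a b h => Fin.ext (Nat.cast_injective h)) hvan
  intro p
  have hc : c p ≠ 0 := div_ne_zero (pow_ne_zero _ Complex.I_ne_zero) (pow_ne_zero _ two_ne_zero)
  exact (mul_eq_zero.mp (congrFun hgc p)).resolve_right hc

noncomputable def dualRow (n : ℕ) : Fin n → ℂ := fun j => (-Complex.I) ^ (n - 1) * (-1) ^ (j : ℕ)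

theorem dualRow_dotProduct_uvec {n : ℕ} (hn : 0 < n) (q : Fin n) :
    dualRow n ⬝ᵥ uvec n q = if q = ⟨0, hn⟩ then 1 else 0 := by
  have hsum := sum_pow_mul_uvec n (-1) q
  simp only [dotProduct, dualRow, mul_assoc, ← mul_sum, hsum, add_neg_cancel, sub_neg_eq_add]
  split_ifs with hq
  · subst hq
    simp only [Nat.sub_zero, pow_zero, one_mul, one_add_one_eq_two]
    rw [div_mul_cancel₀ _ (pow_ne_zero _ two_ne_zero), ← mul_pow, neg_mul, Complex.I_mul_I, neg_neg,
      one_pow]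
  · have hq0 : (q : ℕ) ≠ 0 := fun h => hq (Fin.ext h)
    rw [zero_pow hq0, zero_mul, mul_zero, mul_zero]

theorem vecMul_Emat (n : ℕ) (g : ℕ → ℂ) :
    (fun i : Fin n => g i) ᵥ* Emat n
      = fun j : Fin n => ((n - 1 - (j : ℕ) : ℕ) : ℂ) * g (j + 1) := by
  funext j
  simp only [vecMul, dotProduct, Emat, mul_ite, mul_zero]
  rw [Fin.sum_univ_eq_sum_range (fun i => if i = (j : ℕ) + 1 then g i * _ else 0), sum_ite_eq']
  split_ifs with hj
  · ring
  · rw [show n - 1 - (j : ℕ) = 0 by simp only [mem_range] at hj; omega, Nat.cast_zero, zero_mul]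

theorem dualRow_vecMul_E0 (n k : ℕ) :
    dualRow n ᵥ* E0 n k
      = fun j : Fin n => (-1) ^ k * ((n - 1 - (j : ℕ)).descFactorial k : ℂ) * dualRow n j := by
  induction k with
  | zero => simp only [E0, pow_zero, vecMul_one, Nat.descFactorial_zero, Nat.cast_one, one_mul]
  | succ k ih =>
    simp only [dualRow] at ih ⊢
    rw [E0, pow_succ, ← vecMul_vecMul, ← E0, ih, vecMul_Emat n fun i =>
      (-1) ^ k * ((n - 1 - i).descFactorial k : ℂ) * ((-Complex.I) ^ (n - 1) * (-1) ^ i)]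
    funext j
    rw [show n - 1 - ((j : ℕ) + 1) = n - 1 - (j : ℕ) - 1 by omega, ← Nat.mul_pred_descFactorial]
    push_cast
    ring

theorem dualRow_mul_uvec_zero {n : ℕ} (hn : 0 < n) (j : Fin n) :
    dualRow n j * uvec n ⟨0, hn⟩ j = ((n - 1).choose j : ℂ) / 2 ^ (n - 1) := by
  have hj : (j : ℕ) ∈ range n := mem_range.mpr j.isLt
  simp only [dualRow, uvec, Nat.sub_zero, zero_add, sum_range_one, Nat.choose_zero_right,
    Nat.cast_one, mul_one, sum_ite_eq', if_pos hj]
  have hI : (-Complex.I) ^ (n - 1) * Complex.I ^ (n - 1) = 1 := by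
    rw [← mul_pow, neg_mul, Complex.I_mul_I, neg_neg, one_pow]
  have hsign : (-1 : ℂ) ^ (j : ℕ) * (-1) ^ (j : ℕ) = 1 := by
    rw [← mul_pow, neg_one_mul, neg_neg, one_pow]
  calc _ = ((-Complex.I) ^ (n - 1) * Complex.I ^ (n - 1)) * ((-1) ^ (j : ℕ) * (-1) ^ (j : ℕ))
        * ((n - 1).choose j / 2 ^ (n - 1)) := by ring
    _ = _ := by rw [hI, hsign, one_mul, one_mul]

/-- If `π₁` is the projection onto the line spanned by `u_1` along the span of the other
`u_q`'s, then `Tr(E⁰_k · π₁) = (-1)^k (n-1)! / (2^k (n-k-1)!)`. -/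
theorem stmt_9 (n k : ℕ) (hn : 0 < n) (hk : k ≤ n - 1)
    (P : Matrix (Fin n) (Fin n) ℂ)
    (hP1 : P.mulVec (uvec n ⟨0, hn⟩) = uvec n ⟨0, hn⟩)
    (hP0 : ∀ q : Fin n, q ≠ ⟨0, hn⟩ → P.mulVec (uvec n q) = 0) :
    Matrix.trace (E0 n k * P)
      = (-1 : ℂ) ^ k * ((n - 1).factorial : ℂ) / (2 ^ k * ((n - k - 1).factorial : ℂ)) := by
  have hP : P = vecMulVec (uvec n ⟨0, hn⟩) (dualRow n) :=
    eq_vecMulVec_of_mulVec_eq (linearIndependent_uvec n) (dualRow_dotProduct_uvec hn) hP1 hP0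
  have hsum : ∑ j : Fin n, ((n - 1).choose j * (n - 1 - j).descFactorial k : ℂ)
      = (n - 1).descFactorial k * 2 ^ (n - 1 - k) := by
    rw [Fin.sum_univ_eq_sum_range (fun j => ((n - 1).choose j * (n - 1 - j).descFactorial k : ℂ)),
      show n = n - 1 + 1 by omega]
    exact_mod_cast Nat.sum_range_choose_mul_descFactorial (n - 1) k
  have hfact : ((n - 1 - k).factorial * (n - 1).descFactorial k : ℂ) = (n - 1).factorial := by
    exact_mod_cast Nat.factorial_mul_descFactorial hk
  rw [hP, mul_vecMulVec, trace_vecMulVec, dotProduct_comm, dotProduct_mulVec, dualRow_vecMul_E0]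
  simp only [dotProduct, mul_assoc, dualRow_mul_uvec_zero]
  have hpow : (2 : ℂ) ^ (n - 1) = 2 ^ (n - 1 - k) * 2 ^ k := by
    rw [← pow_add, Nat.sub_add_cancel hk]
  have hF : ((n - 1 - k).factorial : ℂ) ≠ 0 := Nat.cast_ne_zero.mpr (Nat.factorial_ne_zero _)
  calc _ = (-1) ^ k / 2 ^ (n - 1)
        * ∑ j : Fin n, ((n - 1).choose j * (n - 1 - j).descFactorial k : ℂ) := by
        rw [mul_sum]
        exact sum_congr rfl fun j _ => by ring
    _ = _ := by
        rw [hsum, ← hfact, hpow, show n - k - 1 = n - 1 - k by omega]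
        field_simp
end

section
/- With the notation of the previous statement, for 1 ≤ p ≤ n: Tr(E⁰_k·π_p) = ((p-1)!(n-p)!)/(2^k (n-k-1)!) · Σ_{j=max(0,k+p-n)}^{min(k,p-1)} C(n-k-1, p-j-1)·C(k,j)²·(-1)^{j+k}. -/
/-!
Realise coordinate vectors as polynomials in `x, y` by sending the `j`-th basis vector to
`w_j = z^j z̄^(n-1-j)` (indices from `0`). Then `Emat` acts as `z ∂/∂z̄`, and `u_p` becomes the
monomial `x^p y^q` with `q = n-1-p`; so the `u_q` form a basis of monomials and
`Tr(E⁰_k π_p)` is the coefficient of `x^p y^q` in `(z ∂/∂z̄)^k (x^p y^q)`. Since `z` is killed by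
`∂/∂z̄`, this power is `2^(-k) z^k (∂x + i ∂y)^k`. Expanding both binomials, exactly one term of
`z^k` matches each term of `(∂x + i ∂y)^k (x^p y^q)`, which gives
`2^(-k) ∑_j (-1)^(k-j) C(k,j)² p^(j) q^(k-j)` with falling factorials; rewriting the falling
factorials through `C(p+q-k, p-j)` gives the stated formula.
-/

open MvPolynomial Finset Matrix

theorem MvPolynomial.pderiv_pow_monomial {R σ : Type*} [CommRing R] [DecidableEq σ] (i : σ)
    (m : ℕ) (s : σ →₀ ℕ) (a : R) :
    ((pderiv i).toLinearMap ^ m) (monomial s a) =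
      monomial (s - Finsupp.single i m) (a * (s i).descFactorial m) := by
  induction m with
  | zero => simp
  | succ m ih =>
    rw [pow_succ', Module.End.mul_apply, ih, Derivation.coeFn_coe, pderiv_monomial,
      tsub_tsub, ← Finsupp.single_add, Finsupp.tsub_apply, Finsupp.single_eq_same,
      Nat.descFactorial_succ]
    push_cast
    ring_nf

theorem MvPolynomial.commute_pderiv {R σ : Type*} [CommRing R] (i j : σ) :
    Commute (pderiv (R := R) i).toLinearMap (pderiv (R := R) j).toLinearMap := by
  classical
  refine LinearMap.ext fun f => ?_
  simp only [Module.End.mul_apply, Derivation.coeFn_coe]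
  induction f using MvPolynomial.induction_on with
  | C a => simp
  | add f g hf hg => simp [hf, hg]
  | mul_X f k hf =>
      simp only [Derivation.leibniz, pderiv_X, map_add, smul_eq_mul, hf]
      simp only [Pi.single_apply]
      split_ifs <;> simp <;> ring

theorem Nat.descFactorial_mul_descFactorial_mul_factorial {a b i j : ℕ} (hi : i ≤ a) (hj : j ≤ b) :
    a.descFactorial i * b.descFactorial j * (a - i + (b - j)).factorial =
      a.factorial * b.factorial * (a - i + (b - j)).choose (a - i) := by
  rw [← Nat.factorial_mul_descFactorial hi, ← Nat.factorial_mul_descFactorial hj,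
    ← Nat.choose_mul_factorial_mul_factorial (Nat.le_add_right (a - i) (b - j)),
    Nat.add_sub_cancel_left]
  ring

theorem sum_choose_sq_mul_descFactorial {K : Type*} [Field K] [CharZero K] (k a b : ℕ) :
    ∑ j ∈ range (k + 1), (-1 : K) ^ (k - j) * (k.choose j : K) ^ 2 *
        a.descFactorial j * b.descFactorial (k - j) =
      (a.factorial * b.factorial : K) / (a + b - k).factorial *
        ∑ j ∈ Icc (k - b) (min k a),
          ((a + b - k).choose (a - j) : K) * (k.choose j : K) ^ 2 * (-1) ^ (j + k) := by
  have hvanish : ∀ j ∈ range (k + 1), j ∉ Icc (k - b) (min k a) →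
      (-1 : K) ^ (k - j) * (k.choose j : K) ^ 2 * a.descFactorial j * b.descFactorial (k - j) =
        0 := by
    intro j hj hj'
    simp only [mem_Icc, mem_range, le_min_iff, not_and_or, not_le] at hj hj'
    have : a < j ∨ b < k - j := by omega
    rcases this with h | h <;> simp [Nat.descFactorial_eq_zero_iff_lt.2 h]
  rw [← sum_subset (fun j hj => by simp only [mem_Icc, mem_range] at hj ⊢; omega) hvanish,
    mul_sum]
  refine sum_congr rfl fun j hj => ?_
  simp only [mem_Icc, le_min_iff] at hj
  have hnat := Nat.descFactorial_mul_descFactorial_mul_factorial (a := a) (b := b)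
    (i := j) (j := k - j) (by omega) (by omega)
  rw [show a - j + (b - (k - j)) = a + b - k by omega] at hnat
  have hnatK := congrArg (Nat.cast : ℕ → K) hnat
  push_cast at hnatK
  have hsign : (-1 : K) ^ (k - j) = (-1) ^ (j + k) := by
    rw [show j + k = k - j + 2 * j by omega, pow_add, pow_mul]
    norm_num
  rw [hsign, div_mul_eq_mul_div, eq_div_iff (Nat.cast_ne_zero.2 (Nat.factorial_ne_zero _))]
  linear_combination (-1 : K) ^ (j + k) * (k.choose j : K) ^ 2 * hnatK

theorem Matrix.trace_mul_eq_repr_of_proj {ι R : Type*} [Fintype ι] [DecidableEq ι] [CommRing R]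
    (b : Module.Basis ι R (ι → R)) (A P : Matrix ι ι R) (p : ι)
    (hP1 : P *ᵥ b p = b p) (hP0 : ∀ q, q ≠ p → P *ᵥ b q = 0) :
    (A * P).trace = b.repr (A *ᵥ b p) p := by
  rw [← Matrix.trace_toLin'_eq, LinearMap.trace_eq_matrix_trace R b, Matrix.trace,
    Finset.sum_eq_single p]
  · simp [LinearMap.toMatrix_apply, hP1]
  · intro q _ hq
    simp [LinearMap.toMatrix_apply, hP0 q hq]
  · simp

namespace ComplexCoords

noncomputable section

local notation "R2" => MvPolynomial (Fin 2) ℂ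

def zPoly : R2 := X 0 + C Complex.I * X 1
def zbarPoly : R2 := X 0 - C Complex.I * X 1

def xyExp (a b : ℕ) : Fin 2 →₀ ℕ := Finsupp.single 0 a + Finsupp.single 1 b

def xyMono (a b : ℕ) : R2 := monomial (xyExp a b) 1

lemma xyMono_eq (a b : ℕ) : xyMono a b = X 0 ^ a * X 1 ^ b := by
  rw [xyMono, xyExp, ← one_mul (1 : ℂ), ← monomial_mul, X_pow_eq_monomial, X_pow_eq_monomial]

lemma xyExp_injective2 : Function.Injective2 xyExp := by
  intro a b a' b' h
  exact ⟨by simpa [xyExp] using DFunLike.congr_fun h 0,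
    by simpa [xyExp] using DFunLike.congr_fun h 1⟩

lemma coeff_xyMono (a b a' b' : ℕ) :
    coeff (xyExp a b) (xyMono a' b') = if a' = a ∧ b' = b then 1 else 0 := by
  simp only [xyMono, coeff_monomial, xyExp_injective2.eq_iff]

lemma xyExp_add (a b c d : ℕ) : xyExp (a + c) (b + d) = xyExp a b + xyExp c d := by
  simp only [xyExp, Finsupp.single_add]; abel

lemma coeff_mul_xyMono (a b c d : ℕ) (f : R2) :
    coeff (xyExp (a + c) (b + d)) (f * xyMono c d) = coeff (xyExp a b) f := by
  rw [xyExp_add, xyMono, coeff_mul_monomial, mul_one]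

lemma xyExp_apply_zero (a b : ℕ) : xyExp a b 0 = a := by simp [xyExp]

lemma xyExp_apply_one (a b : ℕ) : xyExp a b 1 = b := by simp [xyExp]

lemma xyExp_sub_single_zero (a b m : ℕ) : xyExp a b - Finsupp.single 0 m = xyExp (a - m) b := by
  ext i; fin_cases i <;> simp [xyExp]

lemma xyExp_sub_single_one (a b m : ℕ) : xyExp a b - Finsupp.single 1 m = xyExp a (b - m) := by
  ext i; fin_cases i <;> simp [xyExp]

lemma pderiv_zero_pow_xyMono (m a b : ℕ) :
    ((pderiv 0).toLinearMap ^ m) (xyMono a b) = (a.descFactorial m : ℂ) • xyMono (a - m) b := by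
  rw [xyMono, pderiv_pow_monomial, xyExp_sub_single_zero, xyExp_apply_zero, xyMono,
    smul_monomial, smul_eq_mul, one_mul, mul_one]

lemma pderiv_one_pow_xyMono (m a b : ℕ) :
    ((pderiv 1).toLinearMap ^ m) (xyMono a b) = (b.descFactorial m : ℂ) • xyMono a (b - m) := by
  rw [xyMono, pderiv_pow_monomial, xyExp_sub_single_one, xyExp_apply_one, xyMono,
    smul_monomial, smul_eq_mul, one_mul, mul_one]

/-- `2 ∂/∂z̄ = ∂/∂x + i ∂/∂y`. -/
def dbar : Derivation ℂ R2 R2 := pderiv 0 + Complex.I • pderiv 1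

/-- `E⁰_1 = z ∂/∂z̄`. -/
def zDzbar : Module.End ℂ R2 := LinearMap.mulLeft ℂ zPoly * ((2⁻¹ : ℂ) • dbar.toLinearMap)

lemma dbar_zPoly : dbar zPoly = 0 := by
  simp [dbar, zPoly, pderiv_X, smul_eq_C_mul, ← map_mul]

lemma dbar_zbarPoly : dbar zbarPoly = 2 := by
  simp [dbar, zbarPoly, pderiv_X, smul_eq_C_mul, ← map_mul]
  norm_num

lemma dbar_zPoly_pow_mul (a : ℕ) (f : R2) : dbar (zPoly ^ a * f) = zPoly ^ a * dbar f := by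
  rw [Derivation.leibniz, Derivation.leibniz_pow, dbar_zPoly]
  simp

lemma zDzbar_pow (k : ℕ) :
    zDzbar ^ k = LinearMap.mulLeft ℂ (zPoly ^ k) * ((2⁻¹ : ℂ) ^ k • dbar.toLinearMap ^ k) := by
  have hcomm : Commute (LinearMap.mulLeft ℂ zPoly) ((2⁻¹ : ℂ) • dbar.toLinearMap) :=
    LinearMap.ext fun f => by
      simpa [Module.End.mul_apply] using (congrArg ((2⁻¹ : ℂ) • ·) (dbar_zPoly_pow_mul 1 f)).symm
  rw [zDzbar, hcomm.mul_pow, LinearMap.pow_mulLeft, smul_pow]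

lemma zDzbar_zPoly_pow_mul_zbarPoly_pow (a b : ℕ) :
    zDzbar (zPoly ^ a * zbarPoly ^ b) = (b : ℂ) • (zPoly ^ (a + 1) * zbarPoly ^ (b - 1)) := by
  simp only [zDzbar, Module.End.mul_apply, LinearMap.smul_apply, Derivation.coeFn_coe,
    dbar_zPoly_pow_mul, Derivation.leibniz_pow, dbar_zbarPoly, LinearMap.mulLeft_apply]
  have h2 : C (2⁻¹ : ℂ) * (2 : R2) = 1 := by rw [← map_ofNat C 2, ← map_mul]; norm_num
  simp only [smul_eq_C_mul, nsmul_eq_mul, smul_eq_mul, map_natCast]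
  linear_combination (b * zPoly ^ (a + 1) * zbarPoly ^ (b - 1)) * h2

lemma dbar_pow_xyMono (k a b : ℕ) :
    (dbar.toLinearMap ^ k) (xyMono a b) = ∑ j ∈ range (k + 1),
      ((k.choose j : ℂ) * Complex.I ^ (k - j) * a.descFactorial j * b.descFactorial (k - j)) •
        xyMono (a - j) (b - (k - j)) := by
  have hcomm : Commute (pderiv (0 : Fin 2)).toLinearMap
      (Complex.I • (pderiv (R := ℂ) (1 : Fin 2)).toLinearMap) :=
    (commute_pderiv 0 1).smul_right _
  rw [dbar, Derivation.coe_add_linearMap, Derivation.coe_smul_linearMap, hcomm.add_pow,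
    LinearMap.sum_apply]
  refine sum_congr rfl fun j _ => ?_
  rw [Module.End.mul_apply, Module.End.mul_apply, Module.End.natCast_apply, smul_pow,
    LinearMap.smul_apply, ← Nat.cast_smul_eq_nsmul ℂ]
  simp only [map_smul, pderiv_one_pow_xyMono, pderiv_zero_pow_xyMono, smul_smul]
  ring_nf

lemma coeff_zPoly_pow {j k : ℕ} (hjk : j ≤ k) :
    coeff (xyExp j (k - j)) (zPoly ^ k) = k.choose j * Complex.I ^ (k - j) := by
  have hterm (m : ℕ) : X 0 ^ m * (C Complex.I * X 1) ^ (k - m) * (k.choose m : R2) =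
      C (k.choose m * Complex.I ^ (k - m)) * xyMono m (k - m) := by
    rw [xyMono_eq, map_mul, map_pow, map_natCast]; ring
  simp only [zPoly, add_pow, hterm, coeff_sum, coeff_C_mul, coeff_xyMono]
  rw [sum_eq_single j]
  · simp
  · intro m _ hm; simp [hm]
  · exact fun h => absurd (mem_range.2 (Nat.lt_succ_of_le hjk)) h

lemma coeff_zDzbar_pow_xyMono (k a b : ℕ) :
    coeff (xyExp a b) ((zDzbar ^ k) (xyMono a b)) = (2⁻¹ : ℂ) ^ k *
      ∑ j ∈ range (k + 1), (-1 : ℂ) ^ (k - j) * (k.choose j : ℂ) ^ 2 *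
        a.descFactorial j * b.descFactorial (k - j) := by
  rw [zDzbar_pow, Module.End.mul_apply, LinearMap.smul_apply, LinearMap.mulLeft_apply,
    mul_smul_comm, coeff_smul, smul_eq_mul, dbar_pow_xyMono, mul_sum, coeff_sum]
  congr 1
  refine sum_congr rfl fun j hj => ?_
  rw [mul_smul_comm, coeff_smul, smul_eq_mul]
  by_cases h : j ≤ a ∧ k - j ≤ b
  · have hjk : j ≤ k := by simp only [mem_range] at hj; omega
    have hI : Complex.I ^ (k - j) * Complex.I ^ (k - j) = (-1) ^ (k - j) := by
      rw [← mul_pow, Complex.I_mul_I]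
    rw [show xyExp a b = xyExp (j + (a - j)) (k - j + (b - (k - j))) by congr 1 <;> omega,
      coeff_mul_xyMono, coeff_zPoly_pow hjk]
    linear_combination ((k.choose j : ℂ) ^ 2 * a.descFactorial j * b.descFactorial (k - j)) * hI
  · rw [not_and_or, not_le, not_le, ← Nat.descFactorial_eq_zero_iff_lt,
      ← Nat.descFactorial_eq_zero_iff_lt] at h
    rcases h with h | h <;> simp [h]

def toPoly (n : ℕ) : (Fin n → ℂ) →ₗ[ℂ] R2 :=
  Fintype.linearCombination ℂ fun j : Fin n => zPoly ^ (j : ℕ) * zbarPoly ^ (n - 1 - j)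

lemma toPoly_Emat_mulVec (n : ℕ) (v : Fin n → ℂ) :
    toPoly n (Emat n *ᵥ v) = zDzbar (toPoly n v) := by
  suffices toPoly n ∘ₗ (Emat n).toLin' = zDzbar ∘ₗ toPoly n from LinearMap.congr_fun this v
  ext j : 2
  simp only [LinearMap.comp_apply, LinearMap.coe_single, toLin'_apply, mulVec_single_one, toPoly,
    Fintype.linearCombination_apply_single, one_smul, zDzbar_zPoly_pow_mul_zbarPoly_pow]
  simp only [Fintype.linearCombination_apply, col_apply, Emat, ite_smul, zero_smul]
  rw [Fin.sum_univ_eq_sum_range (fun i => if i = j + 1 then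
    ((n - 1 - j : ℕ) : ℂ) • (zPoly ^ i * zbarPoly ^ (n - 1 - i)) else 0) n, sum_ite_eq']
  split_ifs with h
  · rw [Nat.sub_sub (n - 1) (j : ℕ) 1]
  · simp only [mem_range] at h
    simp [show n - 1 - j = 0 by omega]

lemma toPoly_Emat_pow_mulVec (n k : ℕ) (v : Fin n → ℂ) :
    toPoly n ((Emat n ^ k) *ᵥ v) = (zDzbar ^ k) (toPoly n v) := by
  induction k with
  | zero => simp
  | succ k ih =>
    rw [pow_succ', ← mulVec_mulVec, toPoly_Emat_mulVec, ih, pow_succ', Module.End.mul_apply]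

lemma zPoly_add_pow_mul_sub_pow (a b : ℕ) :
    (zPoly + zbarPoly) ^ a * (zbarPoly - zPoly) ^ b =
      ∑ r ∈ range (a + 1), ∑ s ∈ range (b + 1), ((-1 : ℂ) ^ s * a.choose r * b.choose s) •
        (zPoly ^ (r + s) * zbarPoly ^ (a + b - (r + s))) := by
  rw [sub_eq_neg_add, add_pow, add_pow, sum_mul_sum]
  refine sum_congr rfl fun r hr => sum_congr rfl fun s hs => ?_
  simp only [mem_range] at hr hs
  rw [show a + b - (r + s) = (a - r) + (b - s) by omega, neg_pow, smul_eq_C_mul, map_mul,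
    map_mul, map_pow, map_neg, map_one, map_natCast, map_natCast]
  ring

lemma toPoly_uvec (n : ℕ) (p : Fin n) : toPoly n (uvec n p) = xyMono p (n - 1 - p) := by
  obtain ⟨a, ha⟩ := p
  obtain ⟨b, rfl⟩ : ∃ b, n = a + b + 1 := ⟨n - 1 - a, by omega⟩
  simp only [Nat.add_sub_cancel, Nat.add_sub_cancel_left]
  have hexpand : toPoly (a + b + 1) (uvec (a + b + 1) ⟨a, ha⟩) = (Complex.I ^ b / 2 ^ (a + b)) •
      ∑ r ∈ range (a + 1), ∑ s ∈ range (b + 1), ((-1 : ℂ) ^ s * a.choose r * b.choose s) •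
        (zPoly ^ (r + s) * zbarPoly ^ (a + b - (r + s))) := by
    simp only [toPoly, Fintype.linearCombination_apply, uvec, mul_smul, ← smul_sum, sum_smul,
      ite_smul, zero_smul, show a + b + 1 - a = b + 1 by omega, Nat.add_sub_cancel,
      Nat.add_sub_cancel_left]
    rw [sum_comm]
    refine congrArg _ (sum_congr rfl fun r hr => ?_)
    rw [sum_comm]
    refine sum_congr rfl fun s hs => ?_
    have hrs : r + s < a + b + 1 := by simp only [mem_range] at hr hs; omega
    simp only [show ∀ x : Fin (a + b + 1), r + s = (x : ℕ) ↔ ⟨r + s, hrs⟩ = x from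
      fun x => by simp [Fin.ext_iff], sum_ite_eq, mem_univ, if_true]
  have hI : Complex.I ^ b / 2 ^ (a + b) * (2 ^ a * (-2 * Complex.I) ^ b) = 1 := by
    have hIb : Complex.I ^ b * Complex.I ^ b = (-1) ^ b := by rw [← mul_pow, Complex.I_mul_I]
    have hsq : (-1 : ℂ) ^ b * (-1) ^ b = 1 := by rw [← mul_pow]; norm_num
    rw [pow_add, mul_pow, neg_pow, div_mul_eq_mul_div, div_eq_one_iff_eq (by norm_num)]
    linear_combination (2 ^ a * 2 ^ b * (-1 : ℂ) ^ b) * hIb + 2 ^ a * 2 ^ b * hsq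
  have hsum : zPoly + zbarPoly = C 2 * X 0 := by rw [zPoly, zbarPoly, map_ofNat]; ring
  have hdiff : zbarPoly - zPoly = C (-2 * Complex.I) * X 1 := by
    rw [zPoly, zbarPoly, map_mul, map_neg, map_ofNat]; ring
  have hC := congrArg (C (σ := Fin 2)) hI
  rw [map_mul, map_mul, map_one] at hC
  rw [hexpand, ← zPoly_add_pow_mul_sub_pow, hsum, hdiff, mul_pow, mul_pow, xyMono_eq,
    smul_eq_C_mul, ← map_pow, ← map_pow]
  linear_combination (X 0 ^ a * X 1 ^ b : R2) * hC

lemma linearIndependent_uvec (n : ℕ) : LinearIndependent ℂ (uvec n) := by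
  refine LinearIndependent.of_comp (toPoly n) ?_
  have hinj : Function.Injective fun m : Fin n => xyExp m (n - 1 - m) :=
    fun a b h => Fin.ext (xyExp_injective2 h).1
  have h : toPoly n ∘ uvec n = basisMonomials (Fin 2) ℂ ∘ fun m : Fin n => xyExp m (n - 1 - m) :=
    funext fun m => by simp [toPoly_uvec, xyMono]
  rw [h]
  exact (basisMonomials (Fin 2) ℂ).linearIndependent.comp _ hinj

def uBasis (n : ℕ) [NeZero n] : Module.Basis (Fin n) ℂ (Fin n → ℂ) :=
  basisOfLinearIndependentOfCardEqFinrank (linearIndependent_uvec n) (by simp)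

lemma uBasis_apply (n : ℕ) [NeZero n] : ⇑(uBasis n) = uvec n :=
  coe_basisOfLinearIndependentOfCardEqFinrank _ _

lemma uBasis_repr_eq_coeff (n : ℕ) [NeZero n] (v : Fin n → ℂ) (p : Fin n) :
    (uBasis n).repr v p = coeff (xyExp p (n - 1 - p)) (toPoly n v) := by
  have : (uBasis n).coord p = lcoeff ℂ (xyExp p (n - 1 - p)) ∘ₗ toPoly n :=
    (uBasis n).ext fun q => by
      rw [Module.Basis.coord_apply, Module.Basis.repr_self, LinearMap.comp_apply, uBasis_apply,
        toPoly_uvec, lcoeff_apply, coeff_xyMono, Finsupp.single_apply]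
      rcases eq_or_ne q p with rfl | h
      · simp
      · simp [h, Fin.val_injective.ne h]
  exact LinearMap.congr_fun this v

end
end ComplexCoords

open ComplexCoords

theorem stmt_10_general (n k : ℕ) (p : Fin n)
    (P : Matrix (Fin n) (Fin n) ℂ)
    (hP1 : P.mulVec (uvec n p) = uvec n p)
    (hP0 : ∀ q : Fin n, q ≠ p → P.mulVec (uvec n q) = 0) :
    Matrix.trace (E0 n k * P)
      = (((p : ℕ).factorial : ℂ) * ((n - 1 - (p : ℕ)).factorial : ℂ)) /
          (2 ^ k * ((n - k - 1).factorial : ℂ)) *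
        ∑ j ∈ Finset.Icc (k + ((p : ℕ) + 1) - n) (min k (p : ℕ)),
          ((n - k - 1).choose ((p : ℕ) - j) : ℂ) * ((k.choose j : ℕ) : ℂ) ^ 2 *
            (-1 : ℂ) ^ (j + k) := by
  have hpn := p.isLt
  have : NeZero n := ⟨by omega⟩
  rw [trace_mul_eq_repr_of_proj (uBasis n) _ P p (by rwa [uBasis_apply])
      (fun q hq => by rw [uBasis_apply]; exact hP0 q hq),
    uBasis_apply, uBasis_repr_eq_coeff, E0, toPoly_Emat_pow_mulVec, toPoly_uvec,
    coeff_zDzbar_pow_xyMono, sum_choose_sq_mul_descFactorial k p (n - 1 - p),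
    show k + (p + 1) - n = k - (n - 1 - p) by omega, show n - k - 1 = p + (n - 1 - p) - k by omega,
    inv_pow]
  ring

/-- If `π_p` is the projection onto the line spanned by `u_p` along the span of the other
`u_q`'s (here `p : Fin n` corresponds to the 1-based index `p+1`), then
`Tr(E⁰_k·π_p) = ((p-1)!(n-p)!)/(2^k (n-k-1)!) ·
  ∑_{j=max(0,k+p-n)}^{min(k,p-1)} C(n-k-1, p-j-1)·C(k,j)²·(-1)^{j+k}`. -/
theorem stmt_10 (n k : ℕ) (hk : k ≤ n - 1) (p : Fin n)
    (P : Matrix (Fin n) (Fin n) ℂ)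
    (hP1 : P.mulVec (uvec n p) = uvec n p)
    (hP0 : ∀ q : Fin n, q ≠ p → P.mulVec (uvec n q) = 0) :
    Matrix.trace (E0 n k * P)
      = (((p : ℕ).factorial : ℂ) * ((n - 1 - (p : ℕ)).factorial : ℂ)) /
          (2 ^ k * ((n - k - 1).factorial : ℂ)) *
        ∑ j ∈ Finset.Icc (k + ((p : ℕ) + 1) - n) (min k (p : ℕ)),
          ((n - k - 1).choose ((p : ℕ) - j) : ℂ) * ((k.choose j : ℕ) : ℂ) ^ 2 *
            (-1 : ℂ) ^ (j + k) :=
  stmt_10_general n k p P hP1 hP0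
end

section
/- For p = n-1 and k ≤ n-2, the trace Tr(E⁰_k·π_{n-1}) = ((n-2)!)/(2^k(n-k-1)!)·(n - k² - k - 1); in particular it vanishes if and only if n = k² + k + 1. -/
/-!
Send `w_{j+1} = z^j z̄^{n-1-j}` to `(X + 1)^{n-1-j}`, i.e. put `z = 1` and `z̄ = X + 1`. Then
`E = z ∂/∂z̄` acts as `d/dX`, and `u_{q+1}` becomes a nonzero multiple of `(X + 2)^q X^{n-1-q}`.
As `X + 1` and `1` are half the sum and half the difference of `X + 2` and `X`, the `u_q` span,
so `P` is the rank-one projection `v ↦ φ(v) u_{n-1}`, where `φ = I((n-1)c₀ - 2c₁)` is the linear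
form in the first two coefficients that kills every other `u_q`. Hence
`Tr(E^k P) = φ(dᵏ/dXᵏ u_{n-1})` only involves the `k`-th and `(k+1)`-st coefficients of
`(X + 2)^{n-2} X`, which are binomial coefficients.
-/

open Polynomial Finset Complex Matrix

theorem add_pow_mul_sub_pow_mem_span {R A : Type*} [Ring R] [CommRing A] [Module R A]
    (a b : A) (e f : ℕ) :
    (a + b) ^ e * (a - b) ^ f ∈
      Submodule.span R {x | ∃ i j, i + j = e + f ∧ x = a ^ i * b ^ j} := by
  rw [sub_eq_add_neg, add_pow, add_pow, sum_mul_sum]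
  refine Submodule.sum_mem _ fun r hr => Submodule.sum_mem _ fun s hs => ?_
  rw [mem_range] at hr hs
  have hterm :
      a ^ r * b ^ (e - r) * (e.choose r : A) * (a ^ s * (-b) ^ (f - s) * (f.choose s : A)) =
      ((-1) ^ (f - s) * e.choose r * f.choose s : ℤ) • (a ^ (r + s) * b ^ (e - r + (f - s))) := by
    rw [zsmul_eq_mul, neg_pow]
    push_cast
    ring
  rw [hterm]
  refine zsmul_mem (Submodule.subset_span ?_) _
  exact ⟨_, _, by omega, rfl⟩

theorem Matrix.eq_vecMulVec_of_mulVec {ι κ R : Type*} [Fintype ι] [DecidableEq ι] [DecidableEq κ]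
    [CommSemiring R] {v : κ → ι → R} (hv : Submodule.span R (Set.range v) = ⊤) {c : ι → R}
    {k₀ : κ} (hc : ∀ k, c ⬝ᵥ v k = if k = k₀ then 1 else 0) {P : Matrix ι ι R}
    (hP₁ : P *ᵥ v k₀ = v k₀) (hP₀ : ∀ k, k ≠ k₀ → P *ᵥ v k = 0) :
    P = vecMulVec (v k₀) c := by
  refine Matrix.toLin'.injective (LinearMap.ext_on_range hv fun k => ?_)
  by_cases hk : k = k₀
  · subst hk
    simp [vecMulVec_mulVec, hc, hP₁]
  · simp [vecMulVec_mulVec, hc, hk, hP₀ k hk]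

theorem Matrix.trace_mul_vecMulVec {ι R : Type*} [Fintype ι] [CommSemiring R]
    (A : Matrix ι ι R) (u c : ι → R) : trace (A * vecMulVec u c) = c ⬝ᵥ (A *ᵥ u) := by
  rw [mul_vecMulVec, trace_vecMulVec, dotProduct_comm]

theorem uvec_sum_smul_pow {A : Type*} [CommRing A] [Algebra ℂ A] (n : ℕ) (q : Fin n) (y : A) :
    ∑ j : Fin n, uvec n q j • y ^ (n - 1 - j) =
      (I ^ (n - 1 - q) / 2 ^ (n - 1) : ℂ) • ((y + 1) ^ (q : ℕ) * (y - 1) ^ (n - 1 - q)) := by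
  have hq := q.isLt
  rw [show y + 1 = 1 + y by ring, show y - 1 = -1 + y by ring, add_pow, add_pow, sum_mul_sum]
  simp only [uvec, mul_sum, sum_smul, ite_smul, zero_smul, mul_ite, mul_zero]
  rw [sum_comm, smul_sum, show n - q = n - 1 - q + 1 by omega]
  refine sum_congr rfl fun r hr => ?_
  rw [sum_comm, smul_sum]
  refine sum_congr rfl fun s hs => ?_
  rw [mem_range] at hr hs
  rw [Fintype.sum_eq_single ⟨r + s, by omega⟩ fun j hj => if_neg fun h => hj (Fin.ext h.symm),
    if_pos rfl, show n - 1 - (r + s) = (q - r) + (n - 1 - q - s) by omega, pow_add]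
  simp only [Algebra.smul_def, map_mul, map_pow, map_neg, map_one, map_natCast, one_pow]
  ring

noncomputable def toPoly (n : ℕ) : (Fin n → ℂ) →ₗ[ℂ] ℂ[X] :=
  Fintype.linearCombination ℂ fun j : Fin n => (X + 1 : ℂ[X]) ^ (n - 1 - j)

theorem toPoly_apply (n : ℕ) (v : Fin n → ℂ) :
    toPoly n v = ∑ j, v j • (X + 1) ^ (n - 1 - j) :=
  Fintype.linearCombination_apply ℂ _ v

theorem toPoly_single (n : ℕ) (j : Fin n) : toPoly n (Pi.single j 1) = (X + 1) ^ (n - 1 - j) := by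
  simp [toPoly]

theorem toPoly_injective (n : ℕ) : Function.Injective (toPoly n) := by
  intro v w h
  funext j
  have hcoeff : ∀ v, (taylor (-1) (toPoly n v)).coeff (n - 1 - j) = v j := by
    intro v
    simp only [toPoly_apply, map_sum, map_smul, taylor_pow, map_add,
      taylor_X, map_neg, map_one, taylor_one, neg_add_cancel_right, finsetSum_coeff, coeff_smul,
      coeff_X_pow, smul_eq_mul, mul_ite, mul_one, mul_zero]
    refine (Fintype.sum_eq_single j fun i hi => if_neg fun h => hi (Fin.ext ?_)).trans (if_pos rfl)
    omega
  rw [← hcoeff v, h, hcoeff w]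

theorem toPoly_uvec (n : ℕ) (q : Fin n) :
    toPoly n (uvec n q) =
      (I ^ (n - 1 - q) / 2 ^ (n - 1) : ℂ) • ((X + C 2) ^ (q : ℕ) * X ^ (n - 1 - q)) := by
  rw [toPoly_apply, uvec_sum_smul_pow, add_sub_cancel_right, add_assoc, one_add_one_eq_two,
    ← C_ofNat]

theorem toPoly_Emat_mulVec (n : ℕ) (v : Fin n → ℂ) :
    toPoly n (Emat n *ᵥ v) = derivative (toPoly n v) := by
  suffices toPoly n ∘ₗ (Emat n).mulVecLin = derivative ∘ₗ toPoly n from LinearMap.congr_fun this v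
  ext j : 2
  simp only [LinearMap.comp_apply, LinearMap.single_apply, mulVecLin_apply, mulVec_single_one,
    toPoly_single, derivative_pow, derivative_add, derivative_X, derivative_one, add_zero, mul_one]
  simp only [toPoly_apply, col, transpose_apply, Emat, ite_smul, zero_smul]
  by_cases hj : (j : ℕ) + 1 < n
  · rw [Fintype.sum_eq_single ⟨j + 1, hj⟩ fun i hi => if_neg fun h => hi (Fin.ext h), if_pos rfl,
      smul_eq_C_mul, show n - 1 - (j + 1) = n - 1 - j - 1 by omega]
  · rw [Fintype.sum_eq_zero _ fun i => if_neg (by omega), show n - 1 - j = 0 by omega]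
    simp

theorem toPoly_E0_mulVec (n k : ℕ) (v : Fin n → ℂ) :
    toPoly n (E0 n k *ᵥ v) = derivative^[k] (toPoly n v) := by
  induction k with
  | zero => simp [E0]
  | succ k ih =>
    rw [E0, pow_succ', ← mulVec_mulVec, toPoly_Emat_mulVec, ← E0, ih,
      Function.iterate_succ_apply']

theorem span_range_uvec (n : ℕ) : Submodule.span ℂ (Set.range (uvec n)) = ⊤ := by
  rw [eq_top_iff, ← Submodule.map_le_map_iff_of_injective (toPoly_injective n), Submodule.map_top,
    Submodule.map_span]
  rintro _ ⟨v, rfl⟩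
  rw [toPoly_apply]
  refine Submodule.sum_mem _ fun j _ => Submodule.smul_mem _ _ ?_
  have hsplit : (X + 1 : ℂ[X]) ^ (n - 1 - j) =
      ((2 : ℂ) ^ (n - 1))⁻¹ • ((X + C 2 + X) ^ (n - 1 - j) * (X + C 2 - X) ^ (j : ℕ)) := by
    rw [show (X + C 2 + X : ℂ[X]) = C 2 * (X + 1) by rw [C_ofNat]; ring,
      show (X + C 2 - X : ℂ[X]) = C 2 by ring, mul_pow, mul_right_comm, ← pow_add, ← map_pow,
      smul_eq_C_mul, ← mul_assoc, ← map_mul, show n - 1 - j + j = n - 1 by omega,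
      inv_mul_cancel₀ (by norm_num), map_one, one_mul]
  rw [hsplit]
  refine Submodule.smul_mem _ _ (Submodule.span_le.2 ?_ (add_pow_mul_sub_pow_mem_span _ _ _ _))
  rintro _ ⟨i, l, hil, rfl⟩
  have hi : i < n := by omega
  have hα : (I ^ (n - 1 - i) / 2 ^ (n - 1) : ℂ) ≠ 0 := by simp
  have hmono : (X + C 2) ^ i * X ^ l =
      (I ^ (n - 1 - i) / 2 ^ (n - 1) : ℂ)⁻¹ • toPoly n (uvec n ⟨i, hi⟩) := by
    rw [toPoly_uvec, smul_smul, inv_mul_cancel₀ hα, one_smul, show l = n - 1 - i by omega]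
  rw [hmono]
  exact Submodule.smul_mem _ _ (Submodule.subset_span ⟨_, Set.mem_range_self _, rfl⟩)

noncomputable def coeffForm (n : ℕ) : ℂ[X] →ₗ[ℂ] ℂ :=
  I • ((n - 1 : ℂ) • lcoeff ℂ 0 - (2 : ℂ) • lcoeff ℂ 1)

theorem coeffForm_apply (n : ℕ) (p : ℂ[X]) :
    coeffForm n p = I * ((n - 1) * p.coeff 0 - 2 * p.coeff 1) := by
  simp [coeffForm]

noncomputable def dualVec (n : ℕ) : Fin n → ℂ := fun l => coeffForm n ((X + 1) ^ (n - 1 - l))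

theorem dualVec_dotProduct (n : ℕ) (v : Fin n → ℂ) :
    dualVec n ⬝ᵥ v = coeffForm n (toPoly n v) := by
  simp [dotProduct, dualVec, toPoly_apply, mul_comm]

theorem coeffForm_toPoly_uvec {n : ℕ} {p : Fin n} (hp : (p : ℕ) + 2 = n) (q : Fin n) :
    coeffForm n (toPoly n (uvec n q)) = if q = p then 1 else 0 := by
  rw [toPoly_uvec, map_smul, coeffForm_apply, smul_eq_mul]
  simp only [coeff_mul_X_pow', coeff_X_add_C_pow]
  have hq := q.isLt
  rcases (show n - 1 - q = 0 ∨ n - 1 - q = 1 ∨ 2 ≤ n - 1 - q by omega) with h | h | h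
  · rw [if_neg (Fin.ne_of_val_ne (by omega)), h]
    obtain ⟨m, hm⟩ : ∃ m, (q : ℕ) = m + 1 := ⟨q - 1, by omega⟩
    have hnm : (n : ℂ) = m + 2 := by norm_cast; omega
    simp only [hm, hnm, if_pos (Nat.zero_le _), pow_zero, Nat.sub_zero, Nat.choose_zero_right,
      Nat.choose_one_right, Nat.add_sub_cancel]
    push_cast
    ring
  · rw [if_pos (Fin.ext (by omega)), h, show n - 1 = (q : ℕ) + 1 by omega]
    simp only [if_neg (Nat.not_succ_le_zero 0), if_pos le_rfl, pow_one, Nat.sub_self,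
      Nat.sub_zero, Nat.choose_zero_right, Nat.cast_one]
    field_simp
    linear_combination (-2 : ℂ) * 2 ^ (q : ℕ) * I_mul_I
  · rw [if_neg (Fin.ne_of_val_ne (by omega)), if_neg (by omega), if_neg (by omega)]
    simp

theorem coeffForm_iterate_derivative (n k : ℕ) (p : ℂ[X]) :
    coeffForm n (derivative^[k] p) =
      I * ((n - 1) * k.factorial * p.coeff k - 2 * (k + 1).factorial * p.coeff (k + 1)) := by
  have hdesc : (k + 1).descFactorial k = (k + 1).factorial := by
    simpa [Nat.factorial_succ, Nat.descFactorial_self] using Nat.succ_descFactorial k k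
  rw [coeffForm_apply, coeff_iterate_derivative, coeff_iterate_derivative, zero_add, add_comm 1 k,
    Nat.descFactorial_self, hdesc, nsmul_eq_mul, nsmul_eq_mul]
  ring

theorem coeffForm_iterate_derivative_toPoly_uvec {n : ℕ} {p : Fin n} (hp : (p : ℕ) + 2 = n)
    {k : ℕ} (hk : k ≤ n - 2) :
    coeffForm n (derivative^[k] (toPoly n (uvec n p))) =
      ((n - 2).factorial : ℂ) / (2 ^ k * ((n - k - 1).factorial : ℂ)) *
        ((n : ℂ) - (k : ℂ) ^ 2 - (k : ℂ) - 1) := by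
  have hfac : ∀ m : ℕ, (m.factorial : ℂ) ≠ 0 := fun m => Nat.cast_ne_zero.2 m.factorial_ne_zero
  cases k with
  | zero =>
    rw [Function.iterate_zero_apply, coeffForm_toPoly_uvec hp, if_pos rfl]
    obtain ⟨m, rfl⟩ : ∃ m, n = m + 2 := ⟨p, hp.symm⟩
    rw [Nat.add_sub_cancel, show m + 2 - 0 - 1 = m + 1 by omega, Nat.factorial_succ]
    push_cast
    field_simp [hfac m]
    ring
  | succ K =>
    rw [coeffForm_iterate_derivative, toPoly_uvec, show n - 1 - p = 1 by omega]
    obtain ⟨r, hr⟩ : ∃ r, (p : ℕ) = K + 1 + r := ⟨p - K - 1, by omega⟩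
    obtain rfl : n = K + r + 3 := by omega
    simp only [hr, pow_one, coeff_smul, coeff_mul_X, coeff_X_add_C_pow, smul_eq_mul,
      show K + r + 3 - 1 = K + 1 + r + 1 by omega, show K + r + 3 - 2 = K + 1 + r by omega,
      show K + r + 3 - (K + 1) - 1 = r + 1 by omega,
      Nat.cast_choose ℂ (show K ≤ K + 1 + r by omega),
      Nat.cast_choose ℂ (show K + 1 ≤ K + 1 + r by omega),
      show K + 1 + r - K = r + 1 by omega, Nat.add_sub_cancel_left]
    push_cast [Nat.factorial_succ]
    field_simp
    rw [I_sq, div_eq_div_iff (mul_ne_zero (hfac _) (hfac _)) (hfac _)]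
    ring

/-- For `p = n-1` (1-based) and `1 ≤ k ≤ n-2`:
`Tr(E⁰_k·π_{n-1}) = ((n-2)!)/(2^k(n-k-1)!)·(n - k² - k - 1)`, and in particular this
trace vanishes if and only if `n = k² + k + 1`. -/
theorem stmt_13 (n k : ℕ) (hn : 2 ≤ n) (hk : k ≤ n - 2)
    (P : Matrix (Fin n) (Fin n) ℂ)
    (hP1 : P.mulVec (uvec n ⟨n - 2, by omega⟩) = uvec n ⟨n - 2, by omega⟩)
    (hP0 : ∀ q : Fin n, q ≠ ⟨n - 2, by omega⟩ → P.mulVec (uvec n q) = 0) :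
    Matrix.trace (E0 n k * P)
      = ((n - 2).factorial : ℂ) / (2 ^ k * ((n - k - 1).factorial : ℂ)) *
          ((n : ℂ) - (k : ℂ) ^ 2 - (k : ℂ) - 1) ∧
      (Matrix.trace (E0 n k * P) = 0 ↔ n = k ^ 2 + k + 1) := by
  set p₀ : Fin n := ⟨n - 2, by omega⟩
  have hp₀ : (p₀ : ℕ) + 2 = n := Nat.sub_add_cancel hn
  have hP : P = vecMulVec (uvec n p₀) (dualVec n) :=
    Matrix.eq_vecMulVec_of_mulVec (span_range_uvec n)
      (fun q => by rw [dualVec_dotProduct, coeffForm_toPoly_uvec hp₀]) hP1 hP0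
  have htrace : Matrix.trace (E0 n k * P)
      = ((n - 2).factorial : ℂ) / (2 ^ k * ((n - k - 1).factorial : ℂ)) *
          ((n : ℂ) - (k : ℂ) ^ 2 - (k : ℂ) - 1) := by
    rw [hP, Matrix.trace_mul_vecMulVec, dualVec_dotProduct, toPoly_E0_mulVec,
      coeffForm_iterate_derivative_toPoly_uvec hp₀ hk]
  have hfactor : ((n - 2).factorial : ℂ) / (2 ^ k * ((n - k - 1).factorial : ℂ)) ≠ 0 := by
    simp [Nat.factorial_ne_zero]
  refine ⟨htrace, ?_⟩
  rw [htrace, mul_eq_zero, or_iff_right hfactor, sub_sub, sub_sub, sub_eq_zero, ← add_assoc]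
  exact_mod_cast Iff.rfl
end
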